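/- Assume (D+) and let (V,u) be a weak solution of the Lifshitz–Slyozov system with nucleation, with total mass M and V₀ > d(0). Then the second moment M₂(t) := (1/2) ∫₀^∞ x² u(t,x) dx tends to 0 as t → ∞. -/

import Mathlib

open Set Filter Topology MeasureTheory

/-- Assumption (D+): `d : [0,∞) → [0,∞)` is C¹ with `0 < α ≤ d'(x) ≤ β` for all `x ≥ 0`. -/
structure DPlus (d d' : ℝ → ℝ) (α β : ℝ) : Prop where
  nonneg : ∀ x ∈ Set.Ici (0:ℝ), 0 ≤ d x
  hasDeriv : ∀ x ∈ Set.Ici (0:ℝ), HasDerivWithinAt d (d' x) (Set.Ici 0) x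
  contDeriv : ContinuousOn d' (Set.Ici 0)
  alpha_pos : 0 < α
  deriv_lb : ∀ x ∈ Set.Ici (0:ℝ), α ≤ d' x
  deriv_ub : ∀ x ∈ Set.Ici (0:ℝ), d' x ≤ β

/-- A C¹ test function `φ` (with derivative `φ'`) on `[0,∞)` satisfying
`|φ(x)| ≤ C(1+x²)` and `|φ'(x)| ≤ C(1+x)` for some constant `C`. -/
def IsTest (φ φ' : ℝ → ℝ) : Prop :=
  (∀ x ∈ Set.Ici (0:ℝ), HasDerivWithinAt φ (φ' x) (Set.Ici 0) x) ∧
  ContinuousOn φ' (Set.Ici 0) ∧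
  ∃ C : ℝ, ∀ x ∈ Set.Ici (0:ℝ), |φ x| ≤ C * (1 + x ^ 2) ∧ |φ' x| ≤ C * (1 + x)

/-- Weak solution of the Lifshitz–Slyozov system with nucleation parameter `ε`
(`ε = 0`: no nucleation; `ε = 1`: nucleation with nucleus size `i0`) and total mass `M`:
`V` is C¹ on `[0,∞)`, `u(t,·) ≥ 0` with `(1+x²)u(t,x)` integrable, mass conservation
`V(t) + ∫₀^∞ x u(t,x) dx = M` holds, and for every test function `φ`,
`d/dt ∫₀^∞ φ(x)u(t,x)dx = ∫₀^∞ φ'(x)(V(t)−d(x))u(t,x)dx + ε φ(0) V(t)^{i0}`. -/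
structure WeakSolLSN (d : ℝ → ℝ) (M ε : ℝ) (i0 : ℕ) (V : ℝ → ℝ) (u : ℝ → ℝ → ℝ) : Prop where
  u_nonneg : ∀ t ∈ Set.Ici (0:ℝ), ∀ x ∈ Set.Ici (0:ℝ), 0 ≤ u t x
  V_contDiff : ContDiffOn ℝ 1 V (Set.Ici 0)
  u_int : ∀ t ∈ Set.Ici (0:ℝ), IntegrableOn (fun x => (1 + x ^ 2) * u t x) (Set.Ioi 0)
  mass : ∀ t ∈ Set.Ici (0:ℝ), V t + ∫ x in Set.Ioi (0:ℝ), x * u t x = M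
  weak : ∀ φ φ' : ℝ → ℝ, IsTest φ φ' → ∀ t ∈ Set.Ici (0:ℝ),
    HasDerivWithinAt (fun s => ∫ x in Set.Ioi (0:ℝ), φ x * u s x)
      ((∫ x in Set.Ioi (0:ℝ), φ' x * (V t - d x) * u t x) + ε * φ 0 * V t ^ i0)
      (Set.Ici 0) t

/-!
Write `mₖ(t) = ∫₀^∞ xᵏ u(t,x) dx`. The test functions `1, x, x²` give `m₀' = V^{i₀}`,
`V' = -m₁' = -∫ (V - d) u` and `m₂' = ∫ 2x (V - d) u`, while (D+) gives
`d(0) + αx ≤ d(x) ≤ d(0) + βx`. Hence `V ≥ d(0)` at all times, `V' ≤ βM`, and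
`m₂' ≤ 2M (V - d(0)) - 2α m₂`.

If `V ≥ d(0) + δ` at arbitrarily late times, each such time is preceded by an interval of fixed
length on which nucleation raises `m₀` by a fixed amount, so `m₀ → ∞`. But then
`V' ≤ -δ m₀ + βM` pushes `V` below `d(0) + δ` for good. So `V → d(0)`, and the differential
inequality for `m₂` forces `m₂ → 0`.
-/

section RightDeriv

variable {f f' : ℝ → ℝ} {t₀ a b c : ℝ}

theorem mul_sub_le_image_sub_of_le_rightDeriv
    (hf : ∀ t ∈ Ici t₀, HasDerivWithinAt f (f' t) (Ici t₀) t) (ha : t₀ ≤ a) (hab : a ≤ b)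
    {k : ℝ} (hk : ∀ t ∈ Ico a b, k ≤ f' t) : k * (b - a) ≤ f b - f a := by
  have hsub : Icc a b ⊆ Ici t₀ := fun t ht => ha.trans ht.1
  have hline : ∀ t, HasDerivAt (fun s => f a + k * (s - a)) k t := fun t => by
    simpa using ((hasDerivAt_id t).sub_const a).const_mul k |>.const_add (f a)
  have := image_le_of_deriv_right_le_deriv_boundary
    (fun t _ => (hline t).continuousAt.continuousWithinAt)
    (fun t _ => (hline t).hasDerivWithinAt) (by simp)
    (fun t ht => (hf t (hsub ht)).continuousWithinAt.mono hsub)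
    (fun t ht => (hf t (hsub (Ico_subset_Icc_self ht))).mono (Ici_subset_Ici.mpr (ha.trans ht.1)))
    hk (right_mem_Icc.mpr hab)
  linarith

theorem image_sub_le_mul_sub_of_rightDeriv_le
    (hf : ∀ t ∈ Ici t₀, HasDerivWithinAt f (f' t) (Ici t₀) t) (ha : t₀ ≤ a) (hab : a ≤ b)
    {k : ℝ} (hk : ∀ t ∈ Ico a b, f' t ≤ k) : f b - f a ≤ k * (b - a) := by
  have := mul_sub_le_image_sub_of_le_rightDeriv (f := fun t => -f t) (fun t ht => (hf t ht).neg)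
    ha hab (k := -k) (fun t ht => neg_le_neg (hk t ht))
  linarith

/-- The strict comparison principle against the fences `c - η (1 + (t - a))`, then `η → 0`. -/
theorem le_of_rightDeriv_nonneg_of_lt
    (hf : ∀ t ∈ Ici t₀, HasDerivWithinAt f (f' t) (Ici t₀) t) (ha : t₀ ≤ a) (hab : a ≤ b)
    (hfa : c ≤ f a) (hf' : ∀ t ∈ Ico a b, f t < c → 0 ≤ f' t) : c ≤ f b := by
  have hsub : Icc a b ⊆ Ici t₀ := fun t ht => ha.trans ht.1
  have hfence : ∀ η > 0, c - η * (1 + (b - a)) ≤ f b := by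
    intro η hη
    have hline : ∀ t, HasDerivAt (fun s => η * (1 + (s - a)) - c) η t := fun t => by
      simpa using ((((hasDerivAt_id t).sub_const a).const_add 1).const_mul η).sub_const c
    have := image_le_of_deriv_right_lt_deriv_boundary (f := fun s => -f s)
      (fun t ht => (hf t (hsub ht)).continuousWithinAt.neg.mono hsub)
      (fun t ht => ((hf t (hsub (Ico_subset_Icc_self ht))).mono
        (Ici_subset_Ici.mpr (ha.trans ht.1))).neg)
      (by linarith) hline
      (fun t ht heq => by
        have := hf' t ht (by nlinarith [ht.1])
        linarith)
      (right_mem_Icc.mpr hab)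
    linarith
  refine le_of_forall_pos_le_add fun ε hε => ?_
  have hpos : 0 < 1 + (b - a) := by linarith
  have := hfence (ε / (1 + (b - a))) (by positivity)
  rw [div_mul_cancel₀ _ hpos.ne'] at this
  linarith

theorem eventually_le_of_rightDeriv_le_neg
    (hf : ∀ t ∈ Ici t₀, HasDerivWithinAt f (f' t) (Ici t₀) t) {κ : ℝ} (hκ : 0 < κ)
    (hf' : ∀ᶠ t in atTop, c ≤ f t → f' t ≤ -κ) : ∀ᶠ t in atTop, f t ≤ c := by
  obtain ⟨T, hT⟩ := eventually_atTop.mp (hf'.and (eventually_ge_atTop t₀))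
  have hT₀ : t₀ ≤ T := (hT T le_rfl).2
  obtain ⟨t₁, hTt₁, ht₁⟩ : ∃ t₁, T ≤ t₁ ∧ f t₁ ≤ c := by
    by_contra! hgt
    set L := (f T - c) / κ + 1
    have hL : 0 ≤ L := by
      have := hgt T le_rfl
      positivity
    have hdrop := image_sub_le_mul_sub_of_rightDeriv_le hf hT₀ (le_add_of_nonneg_right hL)
      (fun t ht => (hT t ht.1).1 (hgt t ht.1).le)
    have hend := hgt (T + L) (le_add_of_nonneg_right hL)
    have hκL : κ * L = f T - c + κ := by rw [mul_add, mul_div_cancel₀ _ hκ.ne', mul_one]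
    nlinarith
  refine eventually_atTop.mpr ⟨t₁, fun t ht => ?_⟩
  have := le_of_rightDeriv_nonneg_of_lt (f := fun s => -f s) (c := -c) (fun s hs => (hf s hs).neg)
    (hT₀.trans hTt₁) ht (neg_le_neg ht₁)
    (fun s hs hlt => by linarith [(hT s (hTt₁.trans hs.1)).1 (by linarith)])
  linarith

end RightDeriv

namespace DPlus

variable {d d' : ℝ → ℝ} {α β x : ℝ}

theorem continuousOn (hD : DPlus d d' α β) : ContinuousOn d (Ici 0) :=
  fun x hx => (hD.hasDeriv x hx).continuousWithinAt

theorem add_mul_le (hD : DPlus d d' α β) (hx : 0 ≤ x) : d 0 + α * x ≤ d x := by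
  have := mul_sub_le_image_sub_of_le_rightDeriv hD.hasDeriv le_rfl hx
    (fun t ht => hD.deriv_lb t ht.1)
  linarith

theorem le_add_mul (hD : DPlus d d' α β) (hx : 0 ≤ x) : d x ≤ d 0 + β * x := by
  have := image_sub_le_mul_sub_of_rightDeriv_le hD.hasDeriv le_rfl hx
    (fun t ht => hD.deriv_ub t ht.1)
  linarith

theorem beta_pos (hD : DPlus d d' α β) : 0 < β :=
  hD.alpha_pos.trans_le ((hD.deriv_lb 0 self_mem_Ici).trans (hD.deriv_ub 0 self_mem_Ici))

end DPlus

theorem isTest_pow {k : ℕ} (hk : k ≤ 2) : IsTest (fun x => x ^ k) (fun x => k * x ^ (k - 1)) := by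
  refine ⟨fun x _ => (hasDerivAt_pow k x).hasDerivWithinAt, by fun_prop, 2, fun x hx => ?_⟩
  have hx : 0 ≤ x := hx
  interval_cases k <;> simp [abs_of_nonneg hx] <;> (try constructor) <;> nlinarith

theorem integrableOn_mul_of_abs_le_quadratic {u g : ℝ → ℝ}
    (hu : IntegrableOn (fun x => (1 + x ^ 2) * u x) (Ioi 0)) (hu₀ : ∀ x ∈ Ioi (0:ℝ), 0 ≤ u x)
    (hg : AEStronglyMeasurable g (volume.restrict (Ioi 0))) {a b c : ℝ}
    (hgb : ∀ x ∈ Ioi (0:ℝ), |g x| ≤ a + b * x + c * x ^ 2) :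
    IntegrableOn (fun x => g x * u x) (Ioi 0) := by
  have hum : AEStronglyMeasurable u (volume.restrict (Ioi 0)) := by
    have hw : Continuous fun x : ℝ => (1 + x ^ 2)⁻¹ := .inv₀ (by fun_prop) fun x => by positivity
    refine (hw.aestronglyMeasurable.mul hu.aestronglyMeasurable).congr (ae_of_all _ fun x => ?_)
    simp only [Pi.mul_apply]
    field_simp
  refine (hu.const_mul (|a| + |b| + |c|)).mono (hg.mul hum) ?_
  filter_upwards [ae_restrict_mem measurableSet_Ioi] with x hx
  have hx₀ : 0 < x := hx
  have hux := hu₀ x hx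
  rw [norm_mul, Real.norm_eq_abs, Real.norm_of_nonneg hux,
    Real.norm_of_nonneg (by positivity)]
  have hgx := hgb x hx
  have hquad : a + b * x + c * x ^ 2 ≤ (|a| + |b| + |c|) * (1 + x ^ 2) := by
    nlinarith [le_abs_self a, le_abs_self b, le_abs_self c, abs_nonneg a, abs_nonneg b,
      abs_nonneg c, sq_nonneg (x - 1)]
  calc |g x| * u x ≤ (|a| + |b| + |c|) * (1 + x ^ 2) * u x := by gcongr; linarith
    _ = _ := by ring

noncomputable def moment (u : ℝ → ℝ → ℝ) (k : ℕ) (t : ℝ) : ℝ := ∫ x in Ioi (0:ℝ), x ^ k * u t x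

namespace WeakSolLSN

variable {d d' : ℝ → ℝ} {α β M ε : ℝ} {i0 : ℕ} {V : ℝ → ℝ} {u : ℝ → ℝ → ℝ} {t : ℝ}

theorem integrableOn_mul (hsol : WeakSolLSN d M ε i0 V u) (ht : t ∈ Ici 0) {g : ℝ → ℝ}
    (hg : ContinuousOn g (Ici 0)) {a b c : ℝ}
    (hgb : ∀ x ∈ Ioi (0:ℝ), |g x| ≤ a + b * x + c * x ^ 2) :
    IntegrableOn (fun x => g x * u t x) (Ioi 0) :=
  integrableOn_mul_of_abs_le_quadratic (hsol.u_int t ht)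
    (fun x hx => hsol.u_nonneg t ht x (Ioi_subset_Ici_self hx))
    ((hg.mono Ioi_subset_Ici_self).aestronglyMeasurable measurableSet_Ioi) hgb

theorem integrableOn_pow_mul (hsol : WeakSolLSN d M ε i0 V u) (ht : t ∈ Ici 0) {k : ℕ}
    (hk : k ≤ 2) : IntegrableOn (fun x => x ^ k * u t x) (Ioi 0) :=
  hsol.integrableOn_mul ht (by fun_prop) (a := 1) (b := 0) (c := 1) fun x hx => by
    have hx : 0 < x := hx
    rw [abs_of_pos (by positivity)]
    interval_cases k <;> nlinarith

theorem moment_nonneg (hsol : WeakSolLSN d M ε i0 V u) (ht : t ∈ Ici 0) (k : ℕ) :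
    0 ≤ moment u k t :=
  setIntegral_nonneg measurableSet_Ioi fun x hx =>
    mul_nonneg (pow_nonneg (le_of_lt hx) k) (hsol.u_nonneg t ht x (Ioi_subset_Ici_self hx))

theorem moment_one_eq (hsol : WeakSolLSN d M ε i0 V u) (ht : t ∈ Ici 0) :
    moment u 1 t = M - V t := by
  have := hsol.mass t ht
  simp only [moment, pow_one]
  linarith

theorem hasDerivWithinAt_moment (hsol : WeakSolLSN d M ε i0 V u) {k : ℕ} (hk : k ≤ 2)
    (ht : t ∈ Ici 0) :
    HasDerivWithinAt (moment u k)
      ((∫ x in Ioi (0:ℝ), k * x ^ (k - 1) * (V t - d x) * u t x) + ε * 0 ^ k * V t ^ i0)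
      (Ici 0) t :=
  hsol.weak _ _ (isTest_pow hk) t ht

theorem hasDerivWithinAt_moment_zero (hsol : WeakSolLSN d M ε i0 V u) (ht : t ∈ Ici 0) :
    HasDerivWithinAt (moment u 0) (ε * V t ^ i0) (Ici 0) t := by
  simpa using hsol.hasDerivWithinAt_moment (k := 0) (by norm_num) ht

theorem hasDerivWithinAt_moment_one (hsol : WeakSolLSN d M ε i0 V u) (ht : t ∈ Ici 0) :
    HasDerivWithinAt (moment u 1) (∫ x in Ioi (0:ℝ), (V t - d x) * u t x) (Ici 0) t := by
  simpa using hsol.hasDerivWithinAt_moment (k := 1) (by norm_num) ht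

theorem hasDerivWithinAt_moment_two (hsol : WeakSolLSN d M ε i0 V u) (ht : t ∈ Ici 0) :
    HasDerivWithinAt (moment u 2) (∫ x in Ioi (0:ℝ), 2 * x * (V t - d x) * u t x) (Ici 0) t := by
  simpa using hsol.hasDerivWithinAt_moment (k := 2) (by norm_num) ht

theorem hasDerivWithinAt_V (hsol : WeakSolLSN d M ε i0 V u) (ht : t ∈ Ici 0) :
    HasDerivWithinAt V (-∫ x in Ioi (0:ℝ), (V t - d x) * u t x) (Ici 0) t := by
  have h := (hsol.hasDerivWithinAt_moment_one ht).const_sub M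
  exact h.congr (fun s hs => by simp [hsol.moment_one_eq hs]) (by simp [hsol.moment_one_eq ht])

theorem d_zero_le_V (hD : DPlus d d' α β) (hsol : WeakSolLSN d M ε i0 V u) (hV0 : d 0 < V 0)
    (ht : t ∈ Ici 0) : d 0 ≤ V t := by
  refine le_of_rightDeriv_nonneg_of_lt (fun s hs => hsol.hasDerivWithinAt_V hs) le_rfl ht hV0.le
    fun s hs hVs => neg_nonneg.mpr <| setIntegral_nonpos measurableSet_Ioi fun x hx => ?_
  have hx : 0 < x := hx
  have := hD.add_mul_le hx.le
  exact mul_nonpos_of_nonpos_of_nonneg (by nlinarith [hD.alpha_pos])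
    (hsol.u_nonneg s hs.1 x hx.le)

theorem V_le (hsol : WeakSolLSN d M ε i0 V u) (ht : t ∈ Ici 0) : V t ≤ M := by
  linarith [hsol.moment_one_eq ht, hsol.moment_nonneg ht 1]

theorem moment_one_le (hD : DPlus d d' α β) (hsol : WeakSolLSN d M ε i0 V u) (hV0 : d 0 < V 0)
    (ht : t ∈ Ici 0) : moment u 1 t ≤ M := by
  linarith [hsol.moment_one_eq ht, hsol.d_zero_le_V hD hV0 ht, hD.nonneg 0 self_mem_Ici]

theorem M_pos (hD : DPlus d d' α β) (hsol : WeakSolLSN d M ε i0 V u) (hV0 : d 0 < V 0) :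
    0 < M := by
  linarith [hsol.V_le self_mem_Ici, hD.nonneg 0 self_mem_Ici]

theorem sub_le_integral_flux (hD : DPlus d d' α β) (hsol : WeakSolLSN d M ε i0 V u)
    (ht : t ∈ Ici 0) :
    (V t - d 0) * moment u 0 t - β * moment u 1 t ≤ ∫ x in Ioi (0:ℝ), (V t - d x) * u t x := by
  have h₀ := (hsol.integrableOn_pow_mul ht (k := 0) (by norm_num)).const_mul (V t - d 0)
  have h₁ := (hsol.integrableOn_pow_mul ht (k := 1) (by norm_num)).const_mul β
  have hflux : IntegrableOn (fun x => (V t - d x) * u t x) (Ioi 0) :=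
    hsol.integrableOn_mul ht (continuousOn_const.sub hD.continuousOn)
      (a := |V t| + d 0) (b := β) (c := 0) fun x hx => by
        have hx : 0 < x := hx
        have := hD.le_add_mul hx.le
        have := hD.nonneg x hx.le
        rw [abs_le]
        constructor <;> nlinarith [neg_abs_le (V t), le_abs_self (V t), hD.nonneg 0 self_mem_Ici]
  calc (V t - d 0) * moment u 0 t - β * moment u 1 t
      = ∫ x in Ioi (0:ℝ), ((V t - d 0) * (x ^ 0 * u t x) - β * (x ^ 1 * u t x)) := by
        rw [integral_sub h₀ h₁, integral_const_mul, integral_const_mul, moment, moment]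
    _ ≤ _ := setIntegral_mono_on (h₀.sub' h₁) hflux measurableSet_Ioi fun x hx => by
        have hx : 0 < x := hx
        have := hD.le_add_mul hx.le
        have := hsol.u_nonneg t ht x hx.le
        simp only [pow_zero, one_mul, pow_one]
        nlinarith

theorem integral_two_mul_flux_le (hD : DPlus d d' α β) (hsol : WeakSolLSN d M ε i0 V u)
    (ht : t ∈ Ici 0) :
    ∫ x in Ioi (0:ℝ), 2 * x * (V t - d x) * u t x ≤
      2 * (V t - d 0) * moment u 1 t - 2 * α * moment u 2 t := by
  have h₁ := (hsol.integrableOn_pow_mul ht (k := 1) (by norm_num)).const_mul (2 * (V t - d 0))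
  have h₂ := (hsol.integrableOn_pow_mul ht (k := 2) (by norm_num)).const_mul (2 * α)
  have hflux : IntegrableOn (fun x => 2 * x * (V t - d x) * u t x) (Ioi 0) := by
    refine hsol.integrableOn_mul ht (g := fun x => 2 * x * (V t - d x))
      ((continuousOn_const.mul continuousOn_id).mul (continuousOn_const.sub hD.continuousOn))
      (a := 0) (b := 2 * (|V t| + d 0)) (c := 2 * β) fun x hx => ?_
    have hx : 0 < x := hx
    have := hD.le_add_mul hx.le
    have := hD.nonneg x hx.le
    have hV : |V t - d x| ≤ |V t| + d 0 + β * x := by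
      rw [abs_le]
      constructor <;> nlinarith [neg_abs_le (V t), le_abs_self (V t), hD.nonneg 0 self_mem_Ici]
    rw [abs_mul, abs_of_pos (by positivity : 0 < 2 * x)]
    nlinarith
  calc ∫ x in Ioi (0:ℝ), 2 * x * (V t - d x) * u t x
      ≤ ∫ x in Ioi (0:ℝ), (2 * (V t - d 0) * (x ^ 1 * u t x) - 2 * α * (x ^ 2 * u t x)) :=
        setIntegral_mono_on hflux (h₁.sub' h₂) measurableSet_Ioi fun x hx => by
          have hx : 0 < x := hx
          have := hD.add_mul_le hx.le
          have := hsol.u_nonneg t ht x hx.le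
          have : 0 ≤ x * u t x := by positivity
          simp only [pow_one]
          nlinarith
    _ = _ := by rw [integral_sub h₁ h₂, integral_const_mul, integral_const_mul, moment, moment]

theorem moment_zero_monotoneOn (hD : DPlus d d' α β) (hsol : WeakSolLSN d M ε i0 V u)
    (hε : 0 ≤ ε) (hV0 : d 0 < V 0) : MonotoneOn (moment u 0) (Ici 0) := by
  intro a ha b _ hab
  have := mul_sub_le_image_sub_of_le_rightDeriv (fun s hs => hsol.hasDerivWithinAt_moment_zero hs)
    ha hab (k := 0) fun s hs => mul_nonneg hε <| pow_nonneg
      ((hD.nonneg 0 self_mem_Ici).trans (hsol.d_zero_le_V hD hV0 (ha.trans hs.1))) i0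
  linarith

theorem V_sub_le (hD : DPlus d d' α β) (hsol : WeakSolLSN d M ε i0 V u) (hV0 : d 0 < V 0)
    {a b : ℝ} (ha : 0 ≤ a) (hab : a ≤ b) : V b - V a ≤ β * M * (b - a) :=
  image_sub_le_mul_sub_of_rightDeriv_le (fun s hs => hsol.hasDerivWithinAt_V hs) ha hab
    fun s hs => by
      have hs : s ∈ Ici 0 := ha.trans hs.1
      have := hsol.sub_le_integral_flux hD hs
      have := hsol.d_zero_le_V hD hV0 hs
      have := hsol.moment_nonneg hs 0
      have := hsol.moment_one_le hD hV0 hs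
      nlinarith [hD.beta_pos]

/-- `V` grows at rate at most `β M`, so `V ≥ d 0 + δ / 2` on the interval of length
`δ / (2 β M)` before `b`. -/
theorem moment_zero_add_le (hD : DPlus d d' α β) (hsol : WeakSolLSN d M ε i0 V u) (hε : 0 ≤ ε)
    (hV0 : d 0 < V 0) {δ b : ℝ} (hδ : 0 < δ) (hb : δ / (2 * β * M) ≤ b) (hVb : d 0 + δ ≤ V b) :
    moment u 0 (b - δ / (2 * β * M)) + ε * (d 0 + δ / 2) ^ i0 * (δ / (2 * β * M)) ≤
      moment u 0 b := by
  set τ := δ / (2 * β * M)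
  have hβ := hD.beta_pos
  have hM := hsol.M_pos hD hV0
  have hτ₀ : 0 ≤ τ := by positivity
  have hτ : β * M * τ = δ / 2 := by simp only [τ]; field_simp
  have := mul_sub_le_image_sub_of_le_rightDeriv (fun s hs => hsol.hasDerivWithinAt_moment_zero hs)
    (sub_nonneg.mpr hb) (sub_le_self b hτ₀) (k := ε * (d 0 + δ / 2) ^ i0) fun s hs => by
      have hs₀ : 0 ≤ s := (sub_nonneg.mpr hb).trans hs.1
      have := hsol.V_sub_le hD hV0 hs₀ hs.2.le
      have : β * M * (b - s) ≤ β * M * τ := by gcongr; linarith [hs.1]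
      gcongr
      · linarith [hD.nonneg 0 self_mem_Ici, hsol.d_zero_le_V hD hV0 hs₀]
      · linarith
  simp only [sub_sub_cancel] at this
  linarith

theorem tendsto_moment_zero_atTop (hD : DPlus d d' α β) (hsol : WeakSolLSN d M ε i0 V u)
    (hε : 0 < ε) (hV0 : d 0 < V 0) {δ : ℝ} (hδ : 0 < δ)
    (hfreq : ∃ᶠ t in atTop, d 0 + δ ≤ V t) : Tendsto (moment u 0) atTop atTop := by
  set τ := δ / (2 * β * M)
  set gain := ε * (d 0 + δ / 2) ^ i0 * τ
  have hβ := hD.beta_pos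
  have hM := hsol.M_pos hD hV0
  have hgain : 0 < gain := by
    have := hD.nonneg 0 self_mem_Ici
    positivity
  have hmono := hsol.moment_zero_monotoneOn hD hε.le hV0
  have hgrowth : ∀ n : ℕ, ∃ t ∈ Ici (0:ℝ), moment u 0 0 + n * gain ≤ moment u 0 t := by
    intro n
    induction n with
    | zero => exact ⟨0, self_mem_Ici, by simp⟩
    | succ n ih =>
      obtain ⟨t, ht, hn⟩ := ih
      obtain ⟨b, hb, hVb⟩ := frequently_atTop.mp hfreq (t + τ)
      have hτ : 0 ≤ τ := by positivity
      have hb₀ : τ ≤ b := by linarith [show (0:ℝ) ≤ t from ht]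
      have := hsol.moment_zero_add_le hD hε.le hV0 hδ hb₀ hVb
      have := hmono ht (sub_nonneg.mpr hb₀) (by linarith : t ≤ b - τ)
      exact ⟨b, hτ.trans hb₀, by push_cast; linarith⟩
  refine tendsto_atTop.mpr fun R => ?_
  obtain ⟨n, hn⟩ := exists_nat_ge ((R - moment u 0 0) / gain)
  obtain ⟨t, ht, hRt⟩ := hgrowth n
  rw [div_le_iff₀ hgain] at hn
  filter_upwards [eventually_ge_atTop t] with s hs
  linarith [hmono ht (ht.trans hs) hs]

theorem eventually_V_le (hD : DPlus d d' α β) (hsol : WeakSolLSN d M ε i0 V u) (hε : 0 < ε)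
    (hV0 : d 0 < V 0) {δ : ℝ} (hδ : 0 < δ) : ∀ᶠ t in atTop, V t ≤ d 0 + δ := by
  by_contra h
  simp only [not_eventually, not_le] at h
  have hρ := hsol.tendsto_moment_zero_atTop hD hε hV0 hδ (h.mono fun _ => le_of_lt)
  have htrap := eventually_le_of_rightDeriv_le_neg (fun s hs => hsol.hasDerivWithinAt_V hs)
    one_pos (c := d 0 + δ) ?_
  · obtain ⟨t, hgt, hle⟩ := (h.and_eventually htrap).exists
    linarith
  -- above `d 0 + δ`, `V' ≤ -δ m₀ + β M ≤ -1` as soon as `m₀ ≥ (β M + 1) / δ`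
  filter_upwards [tendsto_atTop.mp hρ ((β * M + 1) / δ), eventually_ge_atTop 0] with t hρt ht hVt
  rw [div_le_iff₀ hδ] at hρt
  have := hsol.sub_le_integral_flux hD ht
  have := hsol.moment_one_le hD hV0 ht
  have := hsol.moment_nonneg ht 0
  nlinarith [hD.beta_pos]

theorem tendsto_moment_two (hD : DPlus d d' α β) (hsol : WeakSolLSN d M ε i0 V u) (hε : 0 < ε)
    (hV0 : d 0 < V 0) : Tendsto (moment u 2) atTop (𝓝 0) := by
  refine tendsto_order.mpr ⟨fun a ha => ?_, fun a ha => ?_⟩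
  · filter_upwards [eventually_ge_atTop 0] with t ht using ha.trans_le (hsol.moment_nonneg ht 2)
  have hα := hD.alpha_pos
  have hM := hsol.M_pos hD hV0
  have htrap := eventually_le_of_rightDeriv_le_neg
    (fun s hs => hsol.hasDerivWithinAt_moment_two hs) (κ := α * a / 2) (c := a / 2)
    (by positivity) ?_
  · exact htrap.mono fun t ht => by linarith
  filter_upwards [hsol.eventually_V_le hD hε hV0 (δ := α * a / (4 * M)) (by positivity),
    eventually_ge_atTop 0] with t hV ht hQ
  have hVI : (V t - d 0) * moment u 1 t ≤ α * a / (4 * M) * M :=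
    mul_le_mul (by linarith) (hsol.moment_one_le hD hV0 ht) (hsol.moment_nonneg ht 1)
      (by positivity)
  have hδM : α * a / (4 * M) * M = α * a / 4 := by field_simp
  have hflux := hsol.integral_two_mul_flux_le hD ht
  nlinarith

end WeakSolLSN

theorem LSN_second_moment_vanishes_general
    (d d' : ℝ → ℝ) (α β : ℝ) (hD : DPlus d d' α β)
    (M : ℝ) (i0 : ℕ)
    (V : ℝ → ℝ) (u : ℝ → ℝ → ℝ)
    (hsol : WeakSolLSN d M 1 i0 V u)
    (hV0 : d 0 < V 0) :
    Tendsto (fun t => (1 / 2) * ∫ x in Ioi (0:ℝ), x ^ 2 * u t x) atTop (nhds 0) := by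
  have h := (hsol.tendsto_moment_two hD one_pos hV0).const_mul (1 / 2)
  rw [mul_zero] at h
  exact h

/-- Lemma 2.8: under (D+), for a weak solution of the Lifshitz–Slyozov
system with nucleation (`ε = 1`, nucleus size `i0 ≥ 1`), total mass `M` and `V₀ > d(0)`,
the second moment `M₂(t) = (1/2)∫₀^∞ x² u(t,x) dx` tends to `0` as `t → ∞`. -/
theorem LSN_second_moment_vanishes
    (d d' : ℝ → ℝ) (α β : ℝ) (hD : DPlus d d' α β)
    (M : ℝ) (hM : 0 < M) (i0 : ℕ) (hi0 : 1 ≤ i0)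
    (V : ℝ → ℝ) (u : ℝ → ℝ → ℝ)
    (hsol : WeakSolLSN d M 1 i0 V u)
    (hV0 : d 0 < V 0) :
    Tendsto (fun t => (1 / 2) * ∫ x in Ioi (0:ℝ), x ^ 2 * u t x) atTop (nhds 0) :=
  LSN_second_moment_vanishes_general d d' α β hD M i0 V u hsol hV0
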